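/- arXiv:1410.7675 — 11 statements merged into one kernel-verified Lean document; each statement's English description precedes it below -/
import Mathlib

section
/- Let a, b be real numbers with b > 0 and 1 − a − b ≤ 0. Then the function g(x) = x(x − 1)/(x² − a·x − b) is concave on the open interval (0, 1). -/
/-!
On `(0, 1)` the denominator `q x = x² - a x - b = x (x - 1) + x (1 - a - b) - (1 - x) b` is negative,
and a direct computation gives
`g'' x = 2 ((a - 1 + b) (x³ + b) + b (1 - x)³) / q x ³`,
whose numerator is nonnegative because `a - 1 + b ≥ 0` and `b > 0`.
-/

open Set

section

variable {a b x : ℝ}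

lemma sq_sub_mul_sub_neg_of_mem_Ioo (hb : 0 < b) (hab : 1 - a - b ≤ 0)
    (hx : x ∈ Ioo (0 : ℝ) 1) : x ^ 2 - a * x - b < 0 := by
  obtain ⟨hx0, hx1⟩ := hx
  nlinarith [mul_pos hx0 (sub_pos.2 hx1)]

lemma hasDerivAt_sq_sub_mul_sub (a b x : ℝ) :
    HasDerivAt (fun x : ℝ => x ^ 2 - a * x - b) (2 * x - a) x := by
  simpa using ((hasDerivAt_pow 2 x).sub ((hasDerivAt_id x).const_mul a)).sub_const b

lemma hasDerivAt_snr (hq : x ^ 2 - a * x - b ≠ 0) :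
    HasDerivAt (fun x : ℝ => x * (x - 1) / (x ^ 2 - a * x - b))
      (((1 - a) * x ^ 2 - 2 * b * x + b) / (x ^ 2 - a * x - b) ^ 2) x := by
  have hnum : HasDerivAt (fun x : ℝ => x * (x - 1)) (1 * (x - 1) + x * 1) x :=
    (hasDerivAt_id x).mul ((hasDerivAt_id x).sub_const 1)
  refine (hnum.fun_div (hasDerivAt_sq_sub_mul_sub a b x) hq).congr_deriv ?_
  field_simp
  ring

lemma hasDerivAt_snr_deriv (hq : x ^ 2 - a * x - b ≠ 0) :
    HasDerivAt (fun x : ℝ => ((1 - a) * x ^ 2 - 2 * b * x + b) / (x ^ 2 - a * x - b) ^ 2)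
      (2 * ((a - 1 + b) * (x ^ 3 + b) + b * (1 - x) ^ 3) / (x ^ 2 - a * x - b) ^ 3) x := by
  have hnum : HasDerivAt (fun x : ℝ => (1 - a) * x ^ 2 - 2 * b * x + b)
      ((1 - a) * (2 * x) - 2 * b) x := by
    simpa using (((hasDerivAt_pow 2 x).const_mul (1 - a)).sub
      ((hasDerivAt_id x).const_mul (2 * b))).add_const b
  refine (hnum.fun_div ((hasDerivAt_sq_sub_mul_sub a b x).fun_pow 2)
    (pow_ne_zero 2 hq)).congr_deriv ?_
  simp only [Nat.cast_ofNat, Nat.add_one_sub_one, pow_one]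
  field_simp
  ring

end

/-- For real `a`, `b` with `b > 0` and `1 - a - b ≤ 0`, the function
`g(x) = x(x-1)/(x² - a x - b)` is concave on `(0, 1)`. -/
theorem mrc_snr_concave (a b : ℝ) (hb : 0 < b) (hab : 1 - a - b ≤ 0) :
    ConcaveOn ℝ (Set.Ioo (0 : ℝ) 1)
      (fun x : ℝ => x * (x - 1) / (x ^ 2 - a * x - b)) := by
  have hq : ∀ x ∈ Ioo (0 : ℝ) 1, x ^ 2 - a * x - b < 0 := fun x hx =>
    sq_sub_mul_sub_neg_of_mem_Ioo hb hab hx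
  refine concaveOn_of_hasDerivWithinAt2_nonpos (convex_Ioo 0 1)
    (ContinuousOn.div (by fun_prop) (by fun_prop) fun x hx => (hq x hx).ne)
    (fun x hx => (hasDerivAt_snr (hq x (interior_subset hx)).ne).hasDerivWithinAt)
    (fun x hx => (hasDerivAt_snr_deriv (hq x (interior_subset hx)).ne).hasDerivWithinAt) ?_
  rw [interior_Ioo]
  rintro x hx
  have hx0 : 0 < x := hx.1
  have hx1 : 0 ≤ 1 - x := sub_nonneg.2 hx.2.le
  have hab' : 0 ≤ a - 1 + b := by linarith
  have hnum : 0 ≤ 2 * ((a - 1 + b) * (x ^ 3 + b) + b * (1 - x) ^ 3) := by positivity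
  exact div_nonpos_of_nonneg_of_nonpos hnum (Odd.pow_nonpos ⟨1, rfl⟩ (hq x hx).le)
end

section
/- Let a, b be real numbers with b > 0 and a + b > 1. Then the cubic f(x) = (a − 1)x³ + 3b·x² − 3b·x + a·b + b² is strictly positive for every x in the open interval (0, 1). -/
/-- For real `a`, `b` with `b > 0` and `a + b > 1`, the cubic
`f(x) = (a-1)x³ + 3bx² - 3bx + ab + b²` is strictly positive on `(0, 1)`. -/
theorem cubic_positive (a b : ℝ) (hb : 0 < b) (hab : 1 < a + b) :
    ∀ x ∈ Set.Ioo (0 : ℝ) 1,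
      0 < (a - 1) * x ^ 3 + 3 * b * x ^ 2 - 3 * b * x + a * b + b ^ 2 := by
  rintro x ⟨hx0, hx1⟩
  nlinarith [mul_pos hb (pow_pos (sub_pos.mpr hx1) 3), pow_pos hx0 3,
    mul_pos (pow_pos hx0 3) (sub_pos.mpr (by linarith : 1 - b < a)),
    mul_pos hb (sub_pos.mpr hab)]
end

section
/- Let a, b be real numbers with b > 0, a + b > 1 and a ≠ 1, and define g(x) = x(x − 1)/(x² − a·x − b). Then α* = (b − √(b(a + b − 1)))/(1 − a) lies in the open interval (0, 1), satisfies the stationarity equation (1 − a)(α*)² − 2b·α* + b = 0, and g(α) ≤ g(α*) for every α ∈ (0, 1). -/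
/-- For real `a ≠ 1`, `b > 0` with `a + b > 1`, the point
`α* = (b - √(b(a+b-1)))/(1-a)` lies in `(0,1)`, satisfies the stationarity equation
`(1-a)(α*)² - 2bα* + b = 0`, and maximizes `g(x) = x(x-1)/(x² - ax - b)` over `(0,1)`. -/
theorem optimal_alpha_mrc (a b : ℝ) (hb : 0 < b) (hab : 1 < a + b) (ha : a ≠ 1) :
    let g : ℝ → ℝ := fun x => x * (x - 1) / (x ^ 2 - a * x - b)
    let αs : ℝ := (b - Real.sqrt (b * (a + b - 1))) / (1 - a)
    αs ∈ Set.Ioo (0 : ℝ) 1 ∧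
    (1 - a) * αs ^ 2 - 2 * b * αs + b = 0 ∧
    ∀ α ∈ Set.Ioo (0 : ℝ) 1, g α ≤ g αs := by
  intro g αs
  have h1a : (1:ℝ) - a ≠ 0 := sub_ne_zero.mpr (Ne.symm ha)
  have habm : (0:ℝ) < a + b - 1 := by linarith
  have hs2 : Real.sqrt (b * (a + b - 1)) ^ 2 = b * (a + b - 1) :=
    Real.sq_sqrt (by positivity)
  have hs0 : 0 < Real.sqrt (b * (a + b - 1)) := Real.sqrt_pos.2 (by positivity)
  set s := Real.sqrt (b * (a + b - 1)) with hsdef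
  have hαsdef : αs = (b - s) / (1 - a) := rfl
  have hαs : (1 - a) * αs = b - s := by
    rw [hαsdef]; field_simp
  have hmem : αs ∈ Set.Ioo (0:ℝ) 1 := by
    rcases lt_or_gt_of_ne ha with h | h
    · have hsb : s < b := by
        have h2 : b * (a + b - 1) < b ^ 2 := by nlinarith
        nlinarith [hs2, hs0]
      have hsg : a + b - 1 < s := by
        have h2 : (a + b - 1) ^ 2 < b * (a + b - 1) := by nlinarith
        nlinarith [hs2, hs0]
      constructor
      · rw [hαsdef]; apply div_pos <;> linarith
      · rw [hαsdef, div_lt_one (by linarith : (0:ℝ) < 1 - a)]; linarith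
    · have hsb : b < s := by
        have h2 : b ^ 2 < b * (a + b - 1) := by nlinarith
        nlinarith [hs2, hs0]
      have hsg : s < a + b - 1 := by
        have h2 : b * (a + b - 1) < (a + b - 1) ^ 2 := by nlinarith
        nlinarith [hs2, hs0]
      have heq : αs = (s - b) / (a - 1) := by
        rw [hαsdef, div_eq_div_iff h1a (by intro hc; apply ha; linarith : a - 1 ≠ 0)]
        ring
      constructor
      · rw [heq]; apply div_pos <;> linarith
      · rw [heq, div_lt_one (by linarith)]; linarith
  have hst : (1 - a) * αs ^ 2 - 2 * b * αs + b = 0 := by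
    have key : (1 - a) * ((1 - a) * αs ^ 2 - 2 * b * αs + b) = 0 := by
      linear_combination ((1 - a) * αs - b - s) * hαs + hs2
    rcases mul_eq_zero.mp key with h | h
    · exact absurd h h1a
    · exact h
  have hsval : (a - 1) * αs + b = s := by linear_combination -hαs
  refine ⟨hmem, hst, ?_⟩
  intro α hα
  have hDneg : ∀ x ∈ Set.Ioo (0:ℝ) 1, x ^ 2 - a * x - b < 0 := by
    intro x hx
    nlinarith [mul_pos hx.1 (show (0:ℝ) < a + b - x by linarith [hx.2]),
      mul_pos (show (0:ℝ) < 1 - x by linarith [hx.2]) hb]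
  have hDα := hDneg α hα
  have hDαs := hDneg αs hmem
  have hgdef : ∀ x, g x = x * (x - 1) / (x ^ 2 - a * x - b) := fun _ => rfl
  have hN : α * (α - 1) * (αs ^ 2 - a * αs - b) - αs * (αs - 1) * (α ^ 2 - a * α - b)
      = -(s * (α - αs) ^ 2) := by
    linear_combination (α - αs) * hst - (α - αs) ^ 2 * hsval
  have e1 : g α = (-(α * (α - 1))) / (-(α ^ 2 - a * α - b)) := by
    rw [hgdef, neg_div_neg_eq]
  have e2 : g αs = (-(αs * (αs - 1))) / (-(αs ^ 2 - a * αs - b)) := by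
    rw [hgdef, neg_div_neg_eq]
  rw [e1, e2, div_le_div_iff₀ (by linarith) (by linarith)]
  nlinarith [hN, mul_nonneg hs0.le (sq_nonneg (α - αs))]
end

section
/- Let γ > 0 be a real number and define h(α) = α(1 − α)/(γ + α) for α ∈ (0, 1). Then h is concave on (0, 1), the point α* = −γ + √(γ(γ + 1)) lies in (0, 1), and for every α ∈ (0, 1) one has h(α) ≤ h(α*) = 1 + 2γ − 2√(γ(γ + 1)). -/
/-!
Substituting `u = γ + α` turns the function into `h(α) = 1 + 2γ - (u + c / u)` with
`c = γ(γ + 1)`. The map `u ↦ u + c / u` is convex on `u > 0` and, by AM-GM, at least `2√c`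
with equality at `u = √c`; this gives concavity, the maximiser `α* = √c - γ` and the maximum.
Since `γ² < c < (γ + 1)²`, the maximiser lies in `(0, 1)`.
-/

open Set Real

section AddDiv

variable {c : ℝ}

theorem convexOn_add_div (hc : 0 ≤ c) : ConvexOn ℝ (Ioi 0) fun u : ℝ => u + c / u := by
  have hinv : ConvexOn ℝ (Ioi 0) fun u : ℝ => u⁻¹ := by
    simpa using convexOn_zpow (𝕜 := ℝ) (-1)
  refine ((convexOn_id (convex_Ioi 0)).add (hinv.smul hc)).congr fun u _ => ?_
  simp [div_eq_mul_inv]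

theorem two_mul_sqrt_le_add_div (hc : 0 ≤ c) {u : ℝ} (hu : 0 < u) : 2 * √c ≤ u + c / u := by
  have hsq : u + c / u - 2 * √c = (u - √c) ^ 2 / u := by
    field_simp
    rw [sub_sq, sq_sqrt hc]
    ring
  have : 0 ≤ (u - √c) ^ 2 / u := by positivity
  linarith

theorem sqrt_add_div_sqrt : √c + c / √c = 2 * √c := by
  rw [div_sqrt]
  ring

end AddDiv

theorem mul_one_sub_div_eq {γ α : ℝ} (h : γ + α ≠ 0) :
    α * (1 - α) / (γ + α) = 1 + 2 * γ - ((γ + α) + γ * (γ + 1) / (γ + α)) := by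
  field_simp
  ring

theorem neg_add_sqrt_mul_add_one_mem_Ioo {γ : ℝ} (hγ : 0 < γ) :
    -γ + √(γ * (γ + 1)) ∈ Ioo 0 1 := by
  have hlo : γ < √(γ * (γ + 1)) := (lt_sqrt hγ.le).2 (by nlinarith)
  have hhi : √(γ * (γ + 1)) < γ + 1 := (sqrt_lt' (by linarith)).2 (by nlinarith)
  constructor <;> linarith

/-- For `γ > 0`, the function `h(α) = α(1-α)/(γ+α)` is concave on `(0,1)`,
the point `α* = -γ + √(γ(γ+1))` lies in `(0,1)`, and for every `α ∈ (0,1)`,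
`h(α) ≤ h(α*) = 1 + 2γ - 2√(γ(γ+1))`. -/
theorem effective_snr_optimization (γ : ℝ) (hγ : 0 < γ) :
    let h : ℝ → ℝ := fun α => α * (1 - α) / (γ + α)
    let αs : ℝ := -γ + Real.sqrt (γ * (γ + 1))
    ConcaveOn ℝ (Set.Ioo (0 : ℝ) 1) h ∧
    αs ∈ Set.Ioo (0 : ℝ) 1 ∧
    (∀ α ∈ Set.Ioo (0 : ℝ) 1, h α ≤ h αs) ∧
    h αs = 1 + 2 * γ - 2 * Real.sqrt (γ * (γ + 1)) := by
  intro h αs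
  have hc : 0 ≤ γ * (γ + 1) := by positivity
  have hpos : ∀ α ∈ Ioo (0 : ℝ) 1, 0 < γ + α := fun α hα => by linarith [hα.1]
  have hmem : αs ∈ Ioo 0 1 := neg_add_sqrt_mul_add_one_mem_Ioo hγ
  have hval : h αs = 1 + 2 * γ - 2 * √(γ * (γ + 1)) := by
    have hu : γ + αs = √(γ * (γ + 1)) := by simp only [αs]; ring
    simp only [h]
    rw [mul_one_sub_div_eq (hpos αs hmem).ne', hu, sqrt_add_div_sqrt]
  refine ⟨?_, hmem, fun α hα => ?_, hval⟩
  · have hconvex := ((convexOn_add_div hc).translate_right γ).subset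
      (fun α hα => hpos α hα) (convex_Ioo 0 1)
    refine ((concaveOn_const (1 + 2 * γ) (convex_Ioo 0 1)).sub hconvex).congr fun α hα => ?_
    exact (mul_one_sub_div_eq (hpos α hα).ne').symm
  · simp only [h] at hval ⊢
    rw [hval, mul_one_sub_div_eq (hpos α hα).ne']
    linarith [two_mul_sqrt_le_add_div hc (hpos α hα)]
end

section
/- Let ρ > 0, T > 0 and 0 < T_d < K be real numbers, and set γ = (KρT + T_d)/(ρT(T_d − K)), so that γ < −1. Then the effective SNR ρ_eff(α) = (ρT/(T_d − K)) · α(1 − α)/(γ + α) is well-defined, positive and concave on (0, 1); the point α* = −γ − √(γ(γ + 1)) lies in (0, 1); and for every α ∈ (0, 1), ρ_eff(α) ≤ ρ_eff(α*) = (ρT/(T_d − K))·(2√(γ(γ + 1)) + 1 + 2γ). -/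
open Set

lemma aux_inv_concave (u v a b : ℝ) (hu : u < 0) (hv : v < 0)
    (ha : 0 ≤ a) (hb : 0 ≤ b) (hab : a + b = 1) :
    a/u + b/v ≤ 1/(a*u+b*v) := by
  obtain rfl : b = 1 - a := by linarith
  have hw : a*u + (1-a)*v < 0 := by
    rcases le_total u v with h | h
    · nlinarith
    · nlinarith
  have hD : u*v*(a*u+(1-a)*v) < 0 :=
    mul_neg_of_pos_of_neg (mul_pos_of_neg_of_neg hu hv) hw
  have hmul : (a/u + (1-a)/v - 1/(a*u+(1-a)*v)) * (u*v*(a*u+(1-a)*v))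
      = a*(1-a)*(u-v)^2 := by
    field_simp [hu.ne, hv.ne, hw.ne]
    ring
  have hN : 0 ≤ a*(1-a)*(u-v)^2 := by
    have h1a : 0 ≤ 1 - a := hb
    positivity
  by_contra h
  push_neg at h
  have hX : 0 < a/u + (1-a)/v - 1/(a*u+(1-a)*v) := by linarith
  nlinarith [mul_pos hX (neg_pos.2 hD)]

lemma snr_aux (c γ : ℝ) (hc : c < 0) (hγ : γ < -1) :
    (∀ α ∈ Set.Ioo (0:ℝ) 1, 0 < c * (α*(1-α)/(γ+α))) ∧
    ConcaveOn ℝ (Set.Ioo (0:ℝ) 1) (fun α => c * (α*(1-α)/(γ+α))) ∧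
    (-γ - Real.sqrt (γ*(γ+1)) ∈ Set.Ioo (0:ℝ) 1) ∧
    (∀ α ∈ Set.Ioo (0:ℝ) 1, c*(α*(1-α)/(γ+α)) ≤
      c*((-γ - Real.sqrt (γ*(γ+1)))*(1-(-γ - Real.sqrt (γ*(γ+1))))/(γ+(-γ - Real.sqrt (γ*(γ+1)))))) ∧
    c*((-γ - Real.sqrt (γ*(γ+1)))*(1-(-γ - Real.sqrt (γ*(γ+1))))/(γ+(-γ - Real.sqrt (γ*(γ+1)))))
      = c*(2*Real.sqrt (γ*(γ+1)) + 1 + 2*γ) := by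
  set s := Real.sqrt (γ*(γ+1)) with hs
  have hA : 0 < γ*(γ+1) := mul_pos_of_neg_of_neg (by linarith) (by linarith)
  have hs0 : 0 < s := Real.sqrt_pos.2 hA
  have hs2 : s^2 = γ*(γ+1) := Real.sq_sqrt hA.le
  have hsγ : s < -γ := by
    rw [hs]
    exact Real.sqrt_lt' (by linarith) |>.2 (by nlinarith)
  have hsγ1 : -γ - 1 < s := by
    rw [hs]
    exact (Real.lt_sqrt (by linarith)).2 (by nlinarith)
  -- key identity
  have hkey : ∀ t : ℝ, γ + t < 0 →
      t*(1-t)/(γ+t) = (1+2*γ) - (γ+t) - γ*(γ+1)/(γ+t) := by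
    intro t ht
    field_simp [ht.ne]
    ring
  -- the maximum value identity
  have hmaxden : γ + (-γ - s) = -s := by ring
  have hmaxval : c*((-γ - s)*(1-(-γ - s))/(γ+(-γ - s))) = c*(2*s + 1 + 2*γ) := by
    rw [hmaxden]
    congr 1
    rw [div_eq_iff (by linarith : (-s : ℝ) ≠ 0)]
    nlinarith [hs2]
  refine ⟨?_, ?_, ?_, ?_, hmaxval⟩
  · intro α hα
    have h1 : γ + α < 0 := by have := hα.2; linarith
    have h2 : 0 < α * (1-α) := mul_pos hα.1 (by linarith [hα.2])
    exact mul_pos_of_neg_of_neg hc (div_neg_of_pos_of_neg h2 h1)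
  · refine ⟨convex_Ioo 0 1, ?_⟩
    intro x hx y hy a b ha hb hab
    simp only [smul_eq_mul]
    have hux : γ + x < 0 := by have := hx.2; linarith
    have huy : γ + y < 0 := by have := hy.2; linarith
    have hz1 : a*x + b*y ≤ 1 := by nlinarith [hx.2.le, hy.2.le]
    have huz : γ + (a*x+b*y) < 0 := by linarith
    rw [hkey x hux, hkey y huy, hkey (a*x+b*y) huz]
    have hwz : γ + (a*x+b*y) = a*(γ+x) + b*(γ+y) := by
      linear_combination γ * hab.symm
    have hconv : a/(γ+x) + b/(γ+y) ≤ 1/(γ+(a*x+b*y)) := by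
      rw [hwz]
      exact aux_inv_concave _ _ _ _ hux huy ha hb hab
    have hB : 0 ≤ -(c*(γ*(γ+1))) := by nlinarith
    have key : (a*(c*((1+2*γ)-(γ+x)-γ*(γ+1)/(γ+x)))
          + b*(c*((1+2*γ)-(γ+y)-γ*(γ+1)/(γ+y))))
          - c*((1+2*γ)-(γ+(a*x+b*y))-γ*(γ+1)/(γ+(a*x+b*y)))
        = (-(c*(γ*(γ+1)))) * ((a/(γ+x)+b/(γ+y)) - 1/(γ+(a*x+b*y))) := by
      linear_combination (c*(1+γ)) * hab
    rw [← sub_nonpos, key]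
    exact mul_nonpos_iff.2 (Or.inl ⟨hB, sub_nonpos.2 hconv⟩)
  · exact ⟨by linarith, by linarith⟩
  · intro α hα
    rw [hmaxval]
    have h1 : γ + α < 0 := by have := hα.2; linarith
    have h2 : α*(1-α)/(γ+α) ≥ 2*s + 1 + 2*γ := by
      rw [ge_iff_le, le_div_iff_of_neg h1]
      nlinarith [sq_nonneg (γ + α + s), hs2]
    exact mul_le_mul_of_nonpos_left h2 hc.le
/-- For `ρ > 0`, `T > 0`, `0 < T_d < K` and
`γ = (KρT + T_d)/(ρT(T_d - K))`, one has `γ < -1`; the effective SNR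
`ρ_eff(α) = (ρT/(T_d-K))·α(1-α)/(γ+α)` is positive and concave on `(0,1)`;
the point `α* = -γ - √(γ(γ+1))` lies in `(0,1)`; and for every `α ∈ (0,1)`,
`ρ_eff(α) ≤ ρ_eff(α*) = (ρT/(T_d-K))(2√(γ(γ+1)) + 1 + 2γ)`. -/
theorem effective_snr_optimization_Td_lt_K (ρ T Td K : ℝ) (hρ : 0 < ρ) (hT : 0 < T)
    (hTd : 0 < Td) (hTdK : Td < K) :
    let γ : ℝ := (K * ρ * T + Td) / (ρ * T * (Td - K))
    let ρeff : ℝ → ℝ := fun α => (ρ * T / (Td - K)) * (α * (1 - α) / (γ + α))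
    let αs : ℝ := -γ - Real.sqrt (γ * (γ + 1))
    γ < -1 ∧
    (∀ α ∈ Set.Ioo (0 : ℝ) 1, 0 < ρeff α) ∧
    ConcaveOn ℝ (Set.Ioo (0 : ℝ) 1) ρeff ∧
    αs ∈ Set.Ioo (0 : ℝ) 1 ∧
    (∀ α ∈ Set.Ioo (0 : ℝ) 1, ρeff α ≤ ρeff αs) ∧
    ρeff αs = (ρ * T / (Td - K)) * (2 * Real.sqrt (γ * (γ + 1)) + 1 + 2 * γ) := by
  intro γ ρeff αs
  have hρT : 0 < ρ * T := mul_pos hρ hT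
  have hden : ρ * T * (Td - K) < 0 := mul_neg_of_pos_of_neg hρT (by linarith)
  have hγ : γ < -1 := by
    show (K * ρ * T + Td) / (ρ * T * (Td - K)) < -1
    rw [div_lt_iff_of_neg hden]
    nlinarith [mul_pos hρT hTd]
  have hc : ρ * T / (Td - K) < 0 := div_neg_of_pos_of_neg hρT (by linarith)
  obtain ⟨h1, h2, h3, h4, h5⟩ := snr_aux (ρ * T / (Td - K)) γ hc hγ
  exact ⟨hγ, h1, h2, h3, h4, h5⟩
end

section
/- Let T > 0, K > 0 and T_d > K be fixed real numbers. Define, for ρ > 0, γ(ρ) = (KρT + T_d)/(ρT(T_d − K)) and α*(ρ) = −γ(ρ) + √(γ(ρ)(γ(ρ) + 1)). Then as ρ → ∞, α*(ρ) converges to √K/(√T_d + √K). -/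
open Filter Topology

/-! γ(ρ) tends to K/(T_d − K) as ρ → ∞ and α* is a continuous function of γ. At γ = K/(T_d − K)
we have γ(γ + 1) = K T_d/(T_d − K)², so α* = (√(K T_d) − K)/(T_d − K) = √K/(√T_d + √K). -/

noncomputable def optimalTrainingFraction (γ : ℝ) : ℝ := -γ + √(γ * (γ + 1))

lemma continuous_optimalTrainingFraction : Continuous optimalTrainingFraction := by
  unfold optimalTrainingFraction
  fun_prop

lemma optimalTrainingFraction_div_sub {a b : ℝ} (ha : 0 ≤ a) (hab : a < b) :
    optimalTrainingFraction (a / (b - a)) = √a / (√b + √a) := by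
  have hsa : √a ^ 2 = a := Real.sq_sqrt ha
  have hsb : √b ^ 2 = b := Real.sq_sqrt (ha.trans hab.le)
  have hba : 0 < b - a := sub_pos.2 hab
  have hsum : 0 < √b + √a := by
    have := Real.sqrt_pos.2 (ha.trans_lt hab)
    positivity
  have hprod : a / (b - a) * (a / (b - a) + 1) = (√a * √b / (b - a)) ^ 2 := by
    rw [div_pow, mul_pow, hsa, hsb]
    field_simp
    ring
  rw [optimalTrainingFraction, hprod, Real.sqrt_sq (by positivity), eq_div_iff hsum.ne',
    ← neg_div, ← add_div, div_mul_eq_mul_div, div_eq_iff hba.ne']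
  linear_combination √a * hsb + √b * hsa

lemma tendsto_affine_div_atTop (a b c : ℝ) :
    Tendsto (fun ρ : ℝ => (a * ρ + b) / (c * ρ)) atTop (𝓝 (a / c)) := by
  have h : Tendsto (fun ρ : ℝ => (a + b * ρ⁻¹) / c) atTop (𝓝 ((a + b * 0) / c)) :=
    (tendsto_const_nhds.add (tendsto_const_nhds.mul tendsto_inv_atTop_zero)).div_const c
  rw [mul_zero, add_zero] at h
  refine h.congr' ?_
  filter_upwards [eventually_ne_atTop 0] with ρ hρ
  rw [mul_comm c, ← div_div, add_div (a * ρ), mul_div_cancel_right₀ _ hρ, div_eq_mul_inv b,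
    add_div]

/-- For fixed `T > 0`, `K > 0`, `T_d > K`, with
`γ(ρ) = (KρT + T_d)/(ρT(T_d-K))` and `α*(ρ) = -γ(ρ) + √(γ(ρ)(γ(ρ)+1))`,
the optimal training fraction `α*(ρ)` converges to `√K/(√T_d + √K)` as `ρ → ∞`. -/
theorem optimal_alpha_high_snr_limit (T K Td : ℝ) (hT : 0 < T) (hK : 0 < K)
    (hTd : K < Td) :
    Tendsto
      (fun ρ : ℝ =>
        -((K * ρ * T + Td) / (ρ * T * (Td - K))) +
          Real.sqrt (((K * ρ * T + Td) / (ρ * T * (Td - K))) *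
            (((K * ρ * T + Td) / (ρ * T * (Td - K))) + 1)))
      atTop (nhds (Real.sqrt K / (Real.sqrt Td + Real.sqrt K))) := by
  have hγ : Tendsto (fun ρ : ℝ => (K * ρ * T + Td) / (ρ * T * (Td - K))) atTop
      (𝓝 (K / (Td - K))) := by
    convert tendsto_affine_div_atTop (K * T) Td (T * (Td - K)) using 2 with ρ
    · ring_nf
    · field_simp
  rw [← optimalTrainingFraction_div_sub hK.le hTd]
  exact (continuous_optimalTrainingFraction.tendsto _).comp hγ
end

section
/- Let T > 0, K > 0 and T_d > K be fixed real numbers. Define, for ρ > 0, γ(ρ) = (KρT + T_d)/(ρT(T_d − K)), α*(ρ) = −γ(ρ) + √(γ(ρ)(γ(ρ) + 1)), and ρ_eff*(ρ) = (ρT/(T_d − K))·(1 + 2γ(ρ) − 2√(γ(ρ)(γ(ρ) + 1))). Then as ρ → 0⁺, α*(ρ) converges to 1/2 and ρ_eff*(ρ)/ρ² converges to T²/(4T_d). -/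
open Filter

/-- For fixed `T > 0`, `K > 0`, `T_d > K`, with
`γ(ρ) = (KρT + T_d)/(ρT(T_d-K))`, `α*(ρ) = -γ(ρ) + √(γ(ρ)(γ(ρ)+1))` and
`ρ_eff*(ρ) = (ρT/(T_d-K))(1 + 2γ(ρ) - 2√(γ(ρ)(γ(ρ)+1)))`, as `ρ → 0⁺`,
`α*(ρ) → 1/2` and `ρ_eff*(ρ)/ρ² → T²/(4T_d)`. -/
theorem optimal_alpha_low_snr_limit (T K Td : ℝ) (hT : 0 < T) (hK : 0 < K)
    (hTd : K < Td) :
    let γ : ℝ → ℝ := fun ρ => (K * ρ * T + Td) / (ρ * T * (Td - K))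
    let αs : ℝ → ℝ := fun ρ => -γ ρ + Real.sqrt (γ ρ * (γ ρ + 1))
    let ρeff : ℝ → ℝ := fun ρ =>
      (ρ * T / (Td - K)) * (1 + 2 * γ ρ - 2 * Real.sqrt (γ ρ * (γ ρ + 1)))
    Tendsto αs (nhdsWithin 0 (Set.Ioi 0)) (nhds (1 / 2)) ∧
    Tendsto (fun ρ => ρeff ρ / ρ ^ 2) (nhdsWithin 0 (Set.Ioi 0))
      (nhds (T ^ 2 / (4 * Td))) := by
  intro γ αs ρeff
  have hTdK : (0:ℝ) < Td - K := by linarith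
  have hTd0 : (0:ℝ) < Td := hK.trans hTd
  set f : ℝ → ℝ := fun ρ => ρ * T * (Td - K) / (K * ρ * T + Td) with hfdef
  have hf0 : f 0 = 0 := by simp [hfdef]
  have hfc : ContinuousAt f 0 := by
    apply ContinuousAt.div
    · fun_prop
    · fun_prop
    · simp; positivity
  have key : ∀ ρ : ℝ, 0 < ρ →
      0 < γ ρ ∧ 0 < f ρ ∧ γ ρ * f ρ = 1 ∧
      Real.sqrt (γ ρ * (γ ρ + 1)) = γ ρ * Real.sqrt (1 + f ρ) := by
    intro ρ hρ
    have hden : 0 < ρ * T * (Td - K) := by positivity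
    have hnum : 0 < K * ρ * T + Td := by positivity
    have hg : 0 < γ ρ := div_pos hnum hden
    have hf : 0 < f ρ := div_pos hden hnum
    have hgf : γ ρ * f ρ = 1 := by
      show (K * ρ * T + Td) / (ρ * T * (Td - K)) * (ρ * T * (Td - K) / (K * ρ * T + Td)) = 1
      field_simp
    refine ⟨hg, hf, hgf, ?_⟩
    have h1 : γ ρ * (γ ρ + 1) = (γ ρ)^2 * (1 + f ρ) := by nlinarith [hgf]
    rw [h1, Real.sqrt_mul (sq_nonneg _), Real.sqrt_sq hg.le]
  have hev : αs =ᶠ[nhdsWithin (0:ℝ) (Set.Ioi 0)]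
      fun ρ => 1 / (Real.sqrt (1 + f ρ) + 1) := by
    filter_upwards [self_mem_nhdsWithin] with ρ hρ
    obtain ⟨hg, hf, hgf, hsq⟩ := key ρ hρ
    set s := Real.sqrt (1 + f ρ) with hs
    have hs0 : 0 ≤ s := Real.sqrt_nonneg _
    have hs2 : s ^ 2 = 1 + f ρ := Real.sq_sqrt (by linarith)
    have hs1 : s + 1 ≠ 0 := by positivity
    show -γ ρ + Real.sqrt (γ ρ * (γ ρ + 1)) = 1 / (s + 1)
    rw [hsq]
    rw [eq_div_iff hs1]
    linear_combination γ ρ * hs2 + hgf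
  have hev2 : (fun ρ => ρeff ρ / ρ ^ 2) =ᶠ[nhdsWithin (0:ℝ) (Set.Ioi 0)]
      fun ρ => T ^ 2 / ((K * ρ * T + Td) * (Real.sqrt (1 + f ρ) + 1) ^ 2) := by
    filter_upwards [self_mem_nhdsWithin] with ρ hρ
    have hρ' : 0 < ρ := hρ
    obtain ⟨hg, hf, hgf, hsq⟩ := key ρ hρ
    set s := Real.sqrt (1 + f ρ) with hs
    have hs0 : 0 ≤ s := Real.sqrt_nonneg _
    have hs2 : s ^ 2 = 1 + f ρ := Real.sq_sqrt (by linarith)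
    have hs1 : s + 1 ≠ 0 := by positivity
    have hnum : 0 < K * ρ * T + Td := by positivity
    have hρ0 : (ρ : ℝ) ≠ 0 := ne_of_gt hρ'
    have hkey : 1 + 2 * γ ρ - 2 * (γ ρ * s) = f ρ / (s + 1) ^ 2 := by
      rw [eq_div_iff (pow_ne_zero 2 hs1)]
      linear_combination (1 - 2 * γ ρ - 2 * γ ρ * s) * hs2 + (-2 - 2 * s) * hgf
    show (ρ * T / (Td - K)) * (1 + 2 * γ ρ - 2 * Real.sqrt (γ ρ * (γ ρ + 1))) / ρ ^ 2
        = T ^ 2 / ((K * ρ * T + Td) * (s + 1) ^ 2)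
    rw [hsq, hkey]
    show (ρ * T / (Td - K)) * (ρ * T * (Td - K) / (K * ρ * T + Td) / (s + 1) ^ 2) / ρ ^ 2
        = T ^ 2 / ((K * ρ * T + Td) * (s + 1) ^ 2)
    rw [div_eq_div_iff (by positivity) (by positivity)]
    field_simp
  constructor
  · refine Tendsto.congr' hev.symm ?_
    have hc : ContinuousAt (fun ρ => 1 / (Real.sqrt (1 + f ρ) + 1)) 0 := by
      apply ContinuousAt.div continuousAt_const
      · exact ((Real.continuous_sqrt.continuousAt.comp (continuousAt_const.add hfc)).add
          continuousAt_const)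
      · simp [hf0]
    convert hc.tendsto.mono_left nhdsWithin_le_nhds using 2
    rw [hf0]; norm_num
  · refine Tendsto.congr' hev2.symm ?_
    have hc : ContinuousAt
        (fun ρ => T ^ 2 / ((K * ρ * T + Td) * (Real.sqrt (1 + f ρ) + 1) ^ 2)) 0 := by
      apply ContinuousAt.div continuousAt_const
      · exact (by fun_prop : ContinuousAt (fun ρ : ℝ => K * ρ * T + Td) 0).mul
          (((Real.continuous_sqrt.continuousAt.comp (continuousAt_const.add hfc)).add
            continuousAt_const).pow 2)
      · simp [hf0]; positivity
    convert hc.tendsto.mono_left nhdsWithin_le_nhds using 2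
    rw [hf0]; norm_num; ring
end

section
/- Let a, b, c be strictly positive real numbers. Then the function f(x) = x·ln(1 + a/(b + c·x)) is concave and monotonically increasing on (0, ∞); in particular f''(x) < 0 and f'(x) > 0 for all x > 0. -/
/-!
With `u = b + c x`, differentiating twice gives
`f' x = log (1 + a/u) - a c x / (u (u + a))` and
`f'' x = -a c (2 b u + a (2 b + c x)) / (u (u + a))²`.
The second is visibly negative. For the first, `log (1 + a/u) > a / (u + a)` (the strict form of
`log y ≤ y - 1` at `y = u / (u + a)`), and `a / (u + a) - a c x / (u (u + a)) = a b / (u (u + a)) > 0`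
because `u - c x = b`. Concavity and strict monotonicity then follow from the signs of `f''`, `f'`.
-/

open Real Filter Topology

lemma div_add_lt_log_one_add_div {a u : ℝ} (ha : 0 < a) (hu : 0 < u) :
    a / (u + a) < log (1 + a / u) := by
  have hlt := log_lt_sub_one_of_pos (x := u / (u + a)) (by positivity)
    ((div_lt_one (by positivity)).2 (by linarith)).ne
  have hinv : 1 + a / u = (u / (u + a))⁻¹ := by field_simp
  have hsub : u / (u + a) - 1 = -(a / (u + a)) := by field_simp; ring
  rw [hinv, log_inv]
  linarith

lemma hasDerivAt_const_add_mul (b c x : ℝ) : HasDerivAt (fun x => b + c * x) c x := by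
  simpa using ((hasDerivAt_id x).const_mul c).const_add b

section SumRate

variable (a b c : ℝ)

noncomputable def sumRate (x : ℝ) : ℝ := x * log (1 + a / (b + c * x))

noncomputable def sumRateDeriv (x : ℝ) : ℝ :=
  log (1 + a / (b + c * x)) - a * c * x / ((b + c * x) * (b + c * x + a))

noncomputable def sumRateDeriv2 (x : ℝ) : ℝ :=
  -(a * c * (2 * b * (b + c * x) + a * (2 * b + c * x))) / ((b + c * x) * (b + c * x + a)) ^ 2

variable {a b c}

lemma hasDerivAt_log_one_add_div {x : ℝ} (ha : 0 ≤ a) (hu : 0 < b + c * x) :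
    HasDerivAt (fun x => log (1 + a / (b + c * x)))
      (-(a * c) / ((b + c * x) * (b + c * x + a))) x := by
  have hpos : 0 < 1 + a / (b + c * x) := by positivity
  convert (((hasDerivAt_const_add_mul b c x).inv hu.ne').const_mul a |>.const_add 1).log
    hpos.ne' using 1
  · ext y; simp [div_eq_mul_inv]
  · simp only [Pi.inv_apply]; field_simp

lemma hasDerivAt_sumRate {x : ℝ} (ha : 0 ≤ a) (hu : 0 < b + c * x) :
    HasDerivAt (sumRate a b c) (sumRateDeriv a b c x) x := by
  refine ((hasDerivAt_id' x).mul (hasDerivAt_log_one_add_div ha hu)).congr_deriv ?_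
  unfold sumRateDeriv
  ring

lemma hasDerivAt_sumRateDeriv {x : ℝ} (ha : 0 ≤ a) (hu : 0 < b + c * x) :
    HasDerivAt (sumRateDeriv a b c) (sumRateDeriv2 a b c x) x := by
  have hlin := hasDerivAt_const_add_mul b c x
  have hden : HasDerivAt (fun x => (b + c * x) * (b + c * x + a))
      (c * (b + c * x + a) + (b + c * x) * c) x := hlin.mul (hlin.add_const a)
  have hnum : HasDerivAt (fun x => a * c * x) (a * c) x := by
    simpa using (hasDerivAt_id x).const_mul (a * c)
  refine ((hasDerivAt_log_one_add_div ha hu).sub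
    (hnum.div hden (by positivity))).congr_deriv ?_
  unfold sumRateDeriv2
  field_simp
  ring

lemma deriv_sumRate {x : ℝ} (ha : 0 ≤ a) (hu : 0 < b + c * x) :
    deriv (sumRate a b c) x = sumRateDeriv a b c x :=
  (hasDerivAt_sumRate ha hu).deriv

lemma deriv_deriv_sumRate {x : ℝ} (ha : 0 ≤ a) (hu : 0 < b + c * x) :
    deriv (deriv (sumRate a b c)) x = sumRateDeriv2 a b c x := by
  have hu_near : ∀ᶠ y in 𝓝 x, 0 < b + c * y :=
    continuousAt_const.eventually_lt (by fun_prop) hu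
  have heq : deriv (sumRate a b c) =ᶠ[𝓝 x] sumRateDeriv a b c :=
    hu_near.mono fun y hy => deriv_sumRate ha hy
  rw [heq.deriv_eq, (hasDerivAt_sumRateDeriv ha hu).deriv]

lemma sumRateDeriv_pos {x : ℝ} (ha : 0 < a) (hb : 0 < b) (hu : 0 < b + c * x) :
    0 < sumRateDeriv a b c x := by
  have hlog := div_add_lt_log_one_add_div ha hu
  have hsplit : a / (b + c * x + a) - a * c * x / ((b + c * x) * (b + c * x + a))
      = a * b / ((b + c * x) * (b + c * x + a)) := by
    field_simp; ring
  have hpos : 0 < a * b / ((b + c * x) * (b + c * x + a)) := by positivity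
  unfold sumRateDeriv
  linarith

lemma sumRateDeriv2_neg {x : ℝ} (ha : 0 < a) (hb : 0 < b) (hc : 0 < c) (hu : 0 < b + c * x) :
    sumRateDeriv2 a b c x < 0 := by
  have h2b : 0 < 2 * b + c * x := by linarith
  unfold sumRateDeriv2
  apply div_neg_of_neg_of_pos _ (by positivity)
  rw [neg_neg_iff_pos]
  positivity

end SumRate

/-- For `a, b, c > 0`, the function `f(x) = x·ln(1 + a/(b + cx))` is
concave and monotonically increasing on `(0, ∞)`; in particular `f''(x) < 0` and
`f'(x) > 0` for all `x > 0`. -/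
theorem rate_concave_increasing_in_Td (a b c : ℝ) (ha : 0 < a) (hb : 0 < b)
    (hc : 0 < c) :
    let f : ℝ → ℝ := fun x => x * Real.log (1 + a / (b + c * x))
    ConcaveOn ℝ (Set.Ioi (0 : ℝ)) f ∧
    StrictMonoOn f (Set.Ioi (0 : ℝ)) ∧
    ∀ x : ℝ, 0 < x → deriv (deriv f) x < 0 ∧ 0 < deriv f x := by
  change ConcaveOn ℝ _ (sumRate a b c) ∧ StrictMonoOn (sumRate a b c) _ ∧
    ∀ x : ℝ, 0 < x → deriv (deriv (sumRate a b c)) x < 0 ∧ 0 < deriv (sumRate a b c) x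
  have hu : ∀ x ∈ Set.Ioi (0 : ℝ), 0 < b + c * x := fun x (hx : 0 < x) => by positivity
  have hcont : ContinuousOn (sumRate a b c) (Set.Ioi 0) := fun x hx =>
    (hasDerivAt_sumRate ha.le (hu x hx)).continuousAt.continuousWithinAt
  have hf' : ∀ x ∈ Set.Ioi (0 : ℝ), 0 < deriv (sumRate a b c) x := fun x hx => by
    rw [deriv_sumRate ha.le (hu x hx)]
    exact sumRateDeriv_pos ha hb (hu x hx)
  have hf'' : ∀ x ∈ Set.Ioi (0 : ℝ), deriv^[2] (sumRate a b c) x < 0 := fun x hx => by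
    rw [Function.iterate_succ_apply, Function.iterate_one, deriv_deriv_sumRate ha.le (hu x hx)]
    exact sumRateDeriv2_neg ha hb hc (hu x hx)
  refine ⟨(strictConcaveOn_of_deriv2_neg' (convex_Ioi 0) hcont hf'').concaveOn,
    strictMonoOn_of_deriv_pos (convex_Ioi 0) hcont (by rwa [interior_Ioi]),
    fun x hx => ⟨hf'' x hx, hf' x hx⟩⟩
end

section
/- Let T > 0, K > 1, M > 1 and 0 < ρ < ρ_max be real numbers. Define a₂ = ρ²T²(K − 1) + ρ²T²/ρ_max, b₂ = ρ²T²(K − 1) + ρT² − ρTK − ρT/ρ_max, c₂ = KρT + T, SNR(α) = α(α − 1)ρ²T²(M − 1)/(a₂α² − b₂α − c₂), and R(α) = (K/T)·(−(ρT/ρ_max)·α + T)·log₂(1 + SNR(α)). Then R is quasiconcave on the open interval (0, 1), i.e., for every β ∈ ℝ the super-level set {α ∈ (0,1) : R(α) ≥ β} is convex. -/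
/-!
Both factors of `R` are positive on `(0, 1)`, so it suffices that `log R` is concave there:
log-concave functions are quasiconcave, and products of log-concave functions are log-concave.
The affine factor is positive and concave. For the logarithmic factor, `1 + SNR = P / D` with
`D = a₂α² - b₂α - c₂` and `P = D + ρ²T²(M - 1)α(α - 1)`; both quadratics are negative at `0`
and at `1`, and `P > D` outside `[0, 1]`, so their roots interlace as `d₁ < p₁ < 0 < 1 < p₂ < d₂`.
Hence `P / D = const · (α - p₁)/(α - d₁) · (p₂ - α)/(d₂ - α)` is a product of positive concave
Möbius factors, so `log (1 + SNR)` is concave, and being positive it is log-concave as well.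
-/

open Set Real

def LogConcaveOn {E : Type*} [AddCommGroup E] [Module ℝ E] (s : Set E) (f : E → ℝ) : Prop :=
  (∀ x ∈ s, 0 < f x) ∧ ConcaveOn ℝ s fun x => log (f x)

section LogConcave

variable {E : Type*} [AddCommGroup E] [Module ℝ E] {s : Set E} {f g : E → ℝ}

theorem ConcaveOn.logConcaveOn (hf : ConcaveOn ℝ s f) (hpos : ∀ x ∈ s, 0 < f x) :
    LogConcaveOn s f := by
  refine ⟨hpos, hf.1, fun x hx y hy a b ha hb hab => ?_⟩
  have hcomb : 0 < a • f x + b • f y := convex_Ioi (0 : ℝ) (hpos x hx) (hpos y hy) ha hb hab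
  calc a • log (f x) + b • log (f y)
      ≤ log (a • f x + b • f y) :=
        strictConcaveOn_log_Ioi.concaveOn.2 (hpos x hx) (hpos y hy) ha hb hab
    _ ≤ log (f (a • x + b • y)) := log_le_log hcomb (hf.2 hx hy ha hb hab)

theorem logConcaveOn_const (hs : Convex ℝ s) {c : ℝ} (hc : 0 < c) :
    LogConcaveOn s fun _ => c :=
  ⟨fun _ _ => hc, concaveOn_const _ hs⟩

theorem LogConcaveOn.mul (hf : LogConcaveOn s f) (hg : LogConcaveOn s g) :
    LogConcaveOn s fun x => f x * g x := by
  refine ⟨fun x hx => mul_pos (hf.1 x hx) (hg.1 x hx), (hf.2.add hg.2).congr fun x hx => ?_⟩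
  simp only [Pi.add_apply]
  rw [log_mul (hf.1 x hx).ne' (hg.1 x hx).ne']

theorem LogConcaveOn.congr (hf : LogConcaveOn s f) (hfg : EqOn f g s) : LogConcaveOn s g :=
  ⟨fun x hx => hfg hx ▸ hf.1 x hx, hf.2.congr fun x hx => by simp only [hfg hx]⟩

theorem LogConcaveOn.quasiconcaveOn (hf : LogConcaveOn s f) : QuasiconcaveOn ℝ s f := by
  intro β
  rcases le_or_gt β 0 with hβ | hβ
  · convert hf.2.1 using 1
    ext x
    exact and_iff_left_of_imp fun hx => hβ.trans (hf.1 x hx).le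
  · convert hf.2.convex_ge (log β) using 1
    ext x
    exact and_congr_right fun hx => (log_le_log_iff hβ (hf.1 x hx)).symm

end LogConcave

theorem logConcaveOn_mul_add {s : Set ℝ} (hs : Convex ℝ s) {m q : ℝ}
    (hpos : ∀ x ∈ s, 0 < m * x + q) : LogConcaveOn s fun x => m * x + q :=
  (((LinearMap.mul ℝ ℝ m).concaveOn hs).add (concaveOn_const q hs)).logConcaveOn hpos

theorem concaveOn_sub_div_sub_of_lt {d p : ℝ} (hdp : d < p) :
    ConcaveOn ℝ (Ioi d) fun x => (x - p) / (x - d) := by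
  refine ⟨convex_Ioi d, fun x hx y hy a b ha hb hab => ?_⟩
  have hz : d < a * x + b * y := convex_Ioi d hx hy ha hb hab
  simp only [smul_eq_mul, mem_Ioi] at hx hy ⊢
  obtain rfl : b = 1 - a := by linarith
  replace hz : 0 < a * x + (1 - a) * y - d := sub_pos.2 hz
  rw [← mul_div_assoc, ← mul_div_assoc, div_add_div _ _ (sub_pos.2 hx).ne' (sub_pos.2 hy).ne',
    div_le_div_iff₀ (mul_pos (sub_pos.2 hx) (sub_pos.2 hy)) hz]
  nlinarith [mul_nonneg (mul_nonneg (mul_nonneg ha hb) (sub_pos.2 hdp).le) (sq_nonneg (x - y))]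

theorem concaveOn_sub_div_sub_of_gt {d p : ℝ} (hpd : p < d) :
    ConcaveOn ℝ (Iio d) fun x => (p - x) / (d - x) := by
  refine ⟨convex_Iio d, fun x hx y hy a b ha hb hab => ?_⟩
  have hz : a * x + b * y < d := convex_Iio d hx hy ha hb hab
  simp only [smul_eq_mul, mem_Iio] at hx hy ⊢
  obtain rfl : b = 1 - a := by linarith
  replace hz : 0 < d - (a * x + (1 - a) * y) := sub_pos.2 hz
  rw [← mul_div_assoc, ← mul_div_assoc, div_add_div _ _ (sub_pos.2 hx).ne' (sub_pos.2 hy).ne',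
    div_le_div_iff₀ (mul_pos (sub_pos.2 hx) (sub_pos.2 hy)) hz]
  nlinarith [mul_nonneg (mul_nonneg (mul_nonneg ha hb) (sub_pos.2 hpd).le) (sq_nonneg (x - y))]

section Quadratic

variable {a b c : ℝ}

theorem mul_div_quadratic_pos {C : ℝ} (ha : 0 ≤ a) (hC : 0 < C) (h0 : c < 0)
    (h1 : a + b + c < 0) {x : ℝ} (hx : x ∈ Ioo 0 1) :
    0 < C * (x * (x - 1)) / (a * x ^ 2 + b * x + c) := by
  obtain ⟨hx0, hx1⟩ := hx
  have hneg : x * (x - 1) < 0 := mul_neg_of_pos_of_neg hx0 (by linarith)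
  -- `ax² + bx + c = (1 - x)·c + x·(a + b + c) + a·x·(x - 1)`
  have hD : a * x ^ 2 + b * x + c < 0 := by nlinarith [mul_nonpos_of_nonneg_of_nonpos ha hneg.le]
  exact div_pos_of_neg_of_neg (mul_neg_of_pos_of_neg hC hneg) hD

theorem exists_roots_lt_zero_one_lt (ha : 0 < a) (h0 : c < 0) (h1 : a + b + c < 0) :
    ∃ r₁ r₂ : ℝ, r₁ < 0 ∧ 1 < r₂ ∧ ∀ x, a * x ^ 2 + b * x + c = a * (x - r₁) * (x - r₂) := by
  have hdisc : 0 ≤ b ^ 2 - 4 * a * c := by nlinarith [sq_nonneg b]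
  set s := √(b ^ 2 - 4 * a * c)
  have hs : s ^ 2 = b ^ 2 - 4 * a * c := sq_sqrt hdisc
  have hfac : ∀ x, a * x ^ 2 + b * x + c
      = a * (x - (-b - s) / (2 * a)) * (x - (-b + s) / (2 * a)) := fun x => by
    field_simp
    linear_combination hs
  have hr : (-b - s) / (2 * a) ≤ (-b + s) / (2 * a) := by
    gcongr
    linarith [sqrt_nonneg (b ^ 2 - 4 * a * c)]
  generalize (-b - s) / (2 * a) = r₁ at hfac hr
  generalize (-b + s) / (2 * a) = r₂ at hfac hr
  refine ⟨r₁, r₂, ?_, ?_, hfac⟩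
  · by_contra! h
    nlinarith [hfac 0, mul_nonneg (mul_nonneg ha.le h) (h.trans hr)]
  · by_contra! h
    nlinarith [hfac 1, mul_nonneg (mul_nonneg ha.le (sub_nonneg.2 (hr.trans h))) (sub_nonneg.2 h)]

end Quadratic

theorem quadratic_roots_interlace {a' C d₁ d₂ p₁ p₂ : ℝ} (ha' : 0 < a') (hC : 0 < C)
    (hd₁ : d₁ < 0) (hd₂ : 1 < d₂) (hp₁ : p₁ < 0) (hp₂ : 1 < p₂) {a : ℝ}
    (h : ∀ x, a' * (x - p₁) * (x - p₂) = a * (x - d₁) * (x - d₂) + C * (x * (x - 1))) :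
    d₁ < p₁ ∧ p₂ < d₂ := by
  have h₁ := h d₁
  have h₂ := h d₂
  simp only [sub_self, mul_zero, zero_mul, zero_add] at h₁ h₂
  constructor
  · by_contra! hle
    nlinarith [mul_pos hC (mul_pos_of_neg_of_neg hd₁ (by linarith : d₁ - 1 < 0)),
      mul_nonneg ha'.le (sub_nonneg.2 hle)]
  · by_contra! hle
    nlinarith [mul_pos hC (mul_pos (by linarith : (0 : ℝ) < d₂) (by linarith : 0 < d₂ - 1)),
      mul_nonneg ha'.le (sub_nonneg.2 hle)]

theorem logConcaveOn_one_add_mul_div_quadratic {a b c C : ℝ} (ha : 0 < a) (hC : 0 < C)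
    (h0 : c < 0) (h1 : a + b + c < 0) :
    LogConcaveOn (Ioo 0 1) fun x => 1 + C * (x * (x - 1)) / (a * x ^ 2 + b * x + c) := by
  obtain ⟨d₁, d₂, hd₁, hd₂, hD⟩ := exists_roots_lt_zero_one_lt ha h0 h1
  obtain ⟨p₁, p₂, hp₁, hp₂, hP⟩ :=
    exists_roots_lt_zero_one_lt (add_pos ha hC) (b := b - C) h0 (by linarith)
  have hPD : ∀ x, (a + C) * (x - p₁) * (x - p₂) = a * (x - d₁) * (x - d₂) + C * (x * (x - 1)) :=
    fun x => by rw [← hP, ← hD]; ring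
  obtain ⟨hdp₁, hpd₂⟩ := quadratic_roots_interlace (add_pos ha hC) hC hd₁ hd₂ hp₁ hp₂ hPD
  have hF₁ : LogConcaveOn (Ioo 0 1) fun x => (x - p₁) / (x - d₁) :=
    ((concaveOn_sub_div_sub_of_lt hdp₁).subset (fun x hx => by simp only [mem_Ioi]; linarith [hx.1])
      (convex_Ioo 0 1)).logConcaveOn fun x hx => div_pos (by linarith [hx.1]) (by linarith [hx.1])
  have hF₂ : LogConcaveOn (Ioo 0 1) fun x => (p₂ - x) / (d₂ - x) :=
    ((concaveOn_sub_div_sub_of_gt hpd₂).subset (fun x hx => by simp only [mem_Iio]; linarith [hx.2])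
      (convex_Ioo 0 1)).logConcaveOn fun x hx => div_pos (by linarith [hx.2]) (by linarith [hx.2])
  refine (((logConcaveOn_const (convex_Ioo 0 1) (div_pos (add_pos ha hC) ha)).mul hF₁).mul
    hF₂).congr fun x hx => ?_
  have hxd₁ : x - d₁ ≠ 0 := by linarith [hx.1]
  have hxd₂ : x - d₂ ≠ 0 := by linarith [hx.2]
  have hxd₂' : d₂ - x ≠ 0 := by linarith [hx.2]
  simp only
  rw [hD x]
  field_simp
  linear_combination (d₂ - x) * hPD x

/-- The MRC achievable rate along the active peak-power constraint line,
`R(α) = (K/T)(-(ρT/ρ_max)α + T)·log₂(1 + SNR(α))` with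
`SNR(α) = α(α-1)ρ²T²(M-1)/(a₂α² - b₂α - c₂)`, is quasiconcave on `(0,1)`:
every super-level set `{α ∈ (0,1) : R(α) ≥ β}` is convex. -/
theorem mrc_rate_quasiconcave (T K M ρ ρmax : ℝ) (hT : 0 < T) (hK : 1 < K)
    (hM : 1 < M) (hρ : 0 < ρ) (hρmax : ρ < ρmax) :
    let a₂ : ℝ := ρ ^ 2 * T ^ 2 * (K - 1) + ρ ^ 2 * T ^ 2 / ρmax
    let b₂ : ℝ := ρ ^ 2 * T ^ 2 * (K - 1) + ρ * T ^ 2 - ρ * T * K - ρ * T / ρmax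
    let c₂ : ℝ := K * ρ * T + T
    let SNR : ℝ → ℝ := fun α =>
      α * (α - 1) * ρ ^ 2 * T ^ 2 * (M - 1) / (a₂ * α ^ 2 - b₂ * α - c₂)
    let R : ℝ → ℝ := fun α =>
      (K / T) * (-(ρ * T / ρmax) * α + T) * Real.logb 2 (1 + SNR α)
    ∀ β : ℝ, Convex ℝ {α ∈ Set.Ioo (0 : ℝ) 1 | β ≤ R α} := by
  intro a₂ b₂ c₂ SNR R
  have hρmax₀ : 0 < ρmax := hρ.trans hρmax
  have ha₂ : 0 < a₂ := by have : 0 < K - 1 := sub_pos.2 hK; positivity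
  have hK₀ : 0 < K := by linarith
  have hc₂ : 0 < c₂ := by positivity
  have hD₁ : a₂ + -b₂ + -c₂ < 0 := by
    have e : a₂ + -b₂ + -c₂ = T * (ρ * T + 1) * (ρ - ρmax) / ρmax := by
      simp only [a₂, b₂, c₂]; field_simp; ring
    rw [e]
    exact div_neg_of_neg_of_pos (mul_neg_of_pos_of_neg (by positivity) (by linarith)) hρmax₀
  have hC : 0 < ρ ^ 2 * T ^ 2 * (M - 1) := by
    have : 0 < M - 1 := sub_pos.2 hM
    positivity
  have hSNR_eq : ∀ α, SNR α
      = ρ ^ 2 * T ^ 2 * (M - 1) * (α * (α - 1)) / (a₂ * α ^ 2 + -b₂ * α + -c₂) :=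
    fun α => by simp only [SNR]; ring
  have hSNR : LogConcaveOn (Ioo 0 1) fun α => 1 + SNR α :=
    (logConcaveOn_one_add_mul_div_quadratic ha₂ hC (neg_neg_of_pos hc₂) hD₁).congr
      fun α _ => by rw [hSNR_eq]
  have hlogSNR : LogConcaveOn (Ioo 0 1) fun α => log (1 + SNR α) :=
    hSNR.2.logConcaveOn fun α hα => log_pos <| lt_add_of_pos_right 1 <| (hSNR_eq α).symm ▸
      mul_div_quadratic_pos ha₂.le hC (neg_neg_of_pos hc₂) hD₁ hα
  have hL : LogConcaveOn (Ioo 0 1) fun α => -(ρ * T / ρmax) * α + T :=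
    logConcaveOn_mul_add (convex_Ioo 0 1) fun α hα => by
      have : 0 < ρmax - ρ * α := by nlinarith [hα.2]
      have e : -(ρ * T / ρmax) * α + T = T * (ρmax - ρ * α) / ρmax := by field_simp; ring
      rw [e]
      positivity
  have hR : LogConcaveOn (Ioo 0 1) R :=
    (((logConcaveOn_const (convex_Ioo 0 1) (div_pos hK₀ hT)).mul hL).mul
      (hlogSNR.mul (logConcaveOn_const (convex_Ioo 0 1) (inv_pos.2 (log_pos one_lt_two))))).congr
      fun α _ => by simp only [R, logb]; ring
  exact hR.quasiconcaveOn
end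

section
/- Fix real numbers T > 0, T_d > 0, K > 1, ρ_u > 0 and α ∈ (0, 1). For each real M > 1 set ρ(M) = ρ_u/√M and define S(M) = (M − 1)·α(1 − α)·(ρ(M)T)² / ( α(1 − α)(ρ(M)T)²(K − 1) + K(1 − α)ρ(M)T + α·ρ(M)T·T_d + T_d ). Then S(M) converges to α(1 − α)·ρ_u²T²/T_d as M → ∞. -/
/-! With `x = ρ_u T / √M → 0`, the numerator is `α(1-α)(M-1)x² → α(1-α)(ρ_u T)²` because
`(M-1)/M → 1`, while the denominator is a polynomial in `x` with constant term `T_d`. -/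

open Filter Topology

theorem tendsto_div_sqrt_mul_atTop_zero (c d : ℝ) :
    Tendsto (fun M : ℝ => c / √M * d) atTop (𝓝 0) := by
  simpa using (tendsto_const_nhds.div_atTop Real.tendsto_sqrt_atTop).mul_const d

theorem tendsto_sub_one_mul_div_sqrt_mul_sq (c d : ℝ) :
    Tendsto (fun M : ℝ => (M - 1) * (c / √M * d) ^ 2) atTop (𝓝 ((c * d) ^ 2)) := by
  have h : Tendsto (fun M : ℝ => (c * d) ^ 2 * (1 - M⁻¹)) atTop (𝓝 ((c * d) ^ 2)) := by
    simpa using ((tendsto_const_nhds (x := (1 : ℝ))).sub tendsto_inv_atTop_zero).const_mul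
      ((c * d) ^ 2)
  refine h.congr' ?_
  filter_upwards [eventually_gt_atTop 0] with M hM
  rw [div_mul_eq_mul_div, div_pow, Real.sq_sqrt hM.le]
  field_simp

theorem mrc_snr_massive_limit_general (T Td K ρu α : ℝ) (hTd : 0 < Td) :
    Tendsto
      (fun M : ℝ =>
        (M - 1) * (α * (1 - α) * (ρu / Real.sqrt M * T) ^ 2) /
          (α * (1 - α) * (ρu / Real.sqrt M * T) ^ 2 * (K - 1) +
            K * (1 - α) * (ρu / Real.sqrt M * T) + α * (ρu / Real.sqrt M * T) * Td + Td))
      atTop (nhds (α * (1 - α) * ρu ^ 2 * T ^ 2 / Td)) := by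
  set x : ℝ → ℝ := fun M => ρu / √M * T
  have hx : Tendsto x atTop (𝓝 0) := tendsto_div_sqrt_mul_atTop_zero ρu T
  have hnum : Tendsto (fun M => (M - 1) * (α * (1 - α) * x M ^ 2)) atTop
      (𝓝 (α * (1 - α) * (ρu * T) ^ 2)) := by
    simpa only [mul_left_comm] using
      (tendsto_sub_one_mul_div_sqrt_mul_sq ρu T).const_mul (α * (1 - α))
  have hden : Tendsto (fun M => α * (1 - α) * x M ^ 2 * (K - 1) + K * (1 - α) * x M +
      α * x M * Td + Td) atTop (𝓝 Td) := by
    have hcont : Continuous fun y : ℝ =>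
        α * (1 - α) * y ^ 2 * (K - 1) + K * (1 - α) * y + α * y * Td + Td := by fun_prop
    exact (hcont.tendsto' 0 Td (by ring)).comp hx
  rw [show α * (1 - α) * ρu ^ 2 * T ^ 2 / Td = α * (1 - α) * (ρu * T) ^ 2 / Td by ring]
  exact hnum.div hden hTd.ne'

/-- With per-user power scaled as `ρ(M) = ρ_u/√M`, the MRC received SNR
`S(M) = (M-1)·α(1-α)(ρ(M)T)² / (α(1-α)(ρ(M)T)²(K-1) + K(1-α)ρ(M)T + αρ(M)T·T_d + T_d)`
converges to `α(1-α)ρ_u²T²/T_d` as `M → ∞`. -/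
theorem mrc_snr_massive_limit (T Td K ρu α : ℝ) (hT : 0 < T) (hTd : 0 < Td)
    (hK : 1 < K) (hρu : 0 < ρu) (hα : α ∈ Set.Ioo (0 : ℝ) 1) :
    Tendsto
      (fun M : ℝ =>
        (M - 1) * (α * (1 - α) * (ρu / Real.sqrt M * T) ^ 2) /
          (α * (1 - α) * (ρu / Real.sqrt M * T) ^ 2 * (K - 1) +
            K * (1 - α) * (ρu / Real.sqrt M * T) + α * (ρu / Real.sqrt M * T) * Td + Td))
      atTop (nhds (α * (1 - α) * ρu ^ 2 * T ^ 2 / Td)) :=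
  mrc_snr_massive_limit_general T Td K ρu α hTd
end

section
/- Let T, K, M, ρ, ρ_max be real numbers with T > 2K > 0, M > 1, K > 1 and 0 < ρ ≤ ρ_max. Define the feasible set F = {(α, T_d) : 0 ≤ α ≤ 1, 0 < T_d ≤ T − K, ρTα + ρ_max·T_d ≤ ρ_max·T, ρTα + ρ_max·T_d ≥ ρT}, the MRC rate R(α, T_d) = (T_d·K/T)·log₂(1 + (M−1)·α(1−α)(ρT)² / ( α(1−α)(ρT)²(K−1) + K(1−α)ρT + αρT·T_d + T_d )), and with T_d° = T − K set α† = (√((ρTK + T_d°)(ρT·T_d° + T_d°)) − (ρTK + T_d°)) / (ρT(T_d° − K)), α₁ = ρ_max·K/(ρT), α₂ = 1 − ρ_max(T − K)/(ρT). If α₂ < α† < α₁, then (α†, T − K) ∈ F and R(α, T_d) ≤ R(α†, T − K) for every (α, T_d) ∈ F. -/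
/-!
For fixed `α` the rate in `T_d` has the shape `x ↦ x log (1 + c / (a + b x))` with `a, c ≥ 0`,
`b > 0`, which is nondecreasing by concavity of `log`; so `T_d = T - K` is optimal. At `T_d = D`
the SINR reads `m α(1-α) / (α(1-α) c + s²(1-α) + t² α)` with `s² = ρTK + D`, `t² = ρTD + D`, and
`s²(1-α) + t² α - α(1-α)(s+t)² = (s(1-α) - tα)²` shows it peaks at `α = s/(s+t)`, which is `α†`
with its denominator rationalized. The bounds `α₂ < α† < α₁` are the two power constraints at
`(α†, T - K)`.
-/

open Real Set

theorem monotoneOn_mul_log_one_add_div {c : ℝ} (hc : 0 ≤ c) :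
    MonotoneOn (fun u => u * log (1 + c / u)) (Ioi 0) := by
  intro u (hu : 0 < u) v (hv : 0 < v) huv
  -- concavity of `log` on the segment from `1` to `1 + c / u`, at the point with weight `u / v`
  have hconc := strictConcaveOn_log_Ioi.concaveOn.2 (mem_Ioi.2 one_pos)
    (mem_Ioi.2 (by positivity : (0 : ℝ) < 1 + c / u))
    (sub_nonneg.2 ((div_le_one hv).2 huv)) (div_nonneg hu.le hv.le) (sub_add_cancel 1 (u / v))
  have hpoint : (1 - u / v) • (1 : ℝ) + (u / v) • (1 + c / u) = 1 + c / v := by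
    simp only [smul_eq_mul]; field_simp; ring
  rw [hpoint, smul_eq_mul, smul_eq_mul, log_one, mul_zero, zero_add] at hconc
  calc u * log (1 + c / u) = v * (u / v * log (1 + c / u)) := by field_simp
    _ ≤ v * log (1 + c / v) := by gcongr

theorem monotoneOn_mul_log_one_add_div_affine {a b c : ℝ} (ha : 0 ≤ a) (hb : 0 < b)
    (hc : 0 ≤ c) : MonotoneOn (fun x => x * log (1 + c / (a + b * x))) (Ioi 0) := by
  intro x (hx : 0 < x) y (hy : 0 < y) hxy
  have hu : 0 < a + b * x := by positivity
  have hv : 0 < a + b * y := by positivity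
  have hratio : x / (a + b * x) ≤ y / (a + b * y) := by
    rw [div_le_div_iff₀ hu hv]; nlinarith
  have hmono := monotoneOn_mul_log_one_add_div hc hu hv (by nlinarith)
  have hlog : 0 ≤ log (1 + c / (a + b * x)) := log_nonneg (le_add_of_nonneg_right (by positivity))
  calc x * log (1 + c / (a + b * x))
      = x / (a + b * x) * ((a + b * x) * log (1 + c / (a + b * x))) := by field_simp
    _ ≤ y / (a + b * y) * ((a + b * y) * log (1 + c / (a + b * y))) := by
      gcongr
    _ = y * log (1 + c / (a + b * y)) := by field_simp

theorem isMaxOn_mul_div_quadratic {m c s t : ℝ} (hm : 0 ≤ m) (hc : 0 ≤ c) (hs : 0 < s)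
    (ht : 0 < t) :
    IsMaxOn (fun α => m * (α * (1 - α)) / (α * (1 - α) * c + (s ^ 2 * (1 - α) + t ^ 2 * α)))
      (Icc 0 1) (s / (s + t)) := by
  refine isMaxOn_iff.2 fun α ⟨hα0, hα1⟩ => ?_
  have hpeak : m * (s / (s + t) * (1 - s / (s + t))) / (s / (s + t) * (1 - s / (s + t)) * c
      + (s ^ 2 * (1 - s / (s + t)) + t ^ 2 * (s / (s + t)))) = m / (c + (s + t) ^ 2) := by
    have hβ : 1 - s / (s + t) = t / (s + t) := by field_simp; ring
    rw [hβ]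
    field_simp
  rw [hpeak]
  rcases (mul_nonneg hα0 (sub_nonneg.2 hα1)).eq_or_lt with hq0 | hqpos
  · rw [← hq0, mul_zero, zero_div]; positivity
  calc m * (α * (1 - α)) / (α * (1 - α) * c + (s ^ 2 * (1 - α) + t ^ 2 * α))
      ≤ m * (α * (1 - α)) / (α * (1 - α) * (c + (s + t) ^ 2)) := by
        gcongr
        nlinarith [sq_nonneg (s * (1 - α) - t * α)]
    _ = m / (c + (s + t) ^ 2) := by
        rw [mul_comm (α * (1 - α)) (c + _), mul_div_mul_right _ _ hqpos.ne']

theorem sqrt_mul_sub_div_sub {a b : ℝ} (ha : 0 ≤ a) (hb : 0 ≤ b) (hab : a ≠ b) :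
    (√(a * b) - a) / (b - a) = √a / (√a + √b) := by
  obtain ⟨x, hx, rfl⟩ : ∃ x, 0 ≤ x ∧ a = x ^ 2 := ⟨√a, sqrt_nonneg a, (sq_sqrt ha).symm⟩
  obtain ⟨y, hy, rfl⟩ : ∃ y, 0 ≤ y ∧ b = y ^ 2 := ⟨√b, sqrt_nonneg b, (sq_sqrt hb).symm⟩
  rw [← mul_pow, sqrt_sq hx, sqrt_sq hy, sqrt_sq (mul_nonneg hx hy)]
  have hxy : x ≠ y := fun h => hab (h ▸ rfl)
  have hsum : x + y ≠ 0 := fun h => hxy (by linarith)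
  have hdiff : y ^ 2 - x ^ 2 ≠ 0 := by
    rw [sq_sub_sq]; exact mul_ne_zero (by rwa [add_comm]) (sub_ne_zero.2 hxy.symm)
  field_simp
  ring

noncomputable def mrcSinr (ρ T K M α Td : ℝ) : ℝ :=
  (M - 1) * α * (1 - α) * (ρ * T) ^ 2 /
    (α * (1 - α) * (ρ * T) ^ 2 * (K - 1) + K * (1 - α) * ρ * T + α * ρ * T * Td + Td)

noncomputable def mrcRate (ρ T K M α Td : ℝ) : ℝ :=
  (Td * K / T) * logb 2 (1 + mrcSinr ρ T K M α Td)

noncomputable def mrcAlphaOpt (ρ T K Td : ℝ) : ℝ :=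
  √(ρ * T * K + Td) / (√(ρ * T * K + Td) + √(ρ * T * Td + Td))

section Mrc

variable {ρ T K M : ℝ}

theorem mrcSinr_eq_div_affine (α Td : ℝ) :
    mrcSinr ρ T K M α Td = (M - 1) * α * (1 - α) * (ρ * T) ^ 2 /
      (α * (1 - α) * (ρ * T) ^ 2 * (K - 1) + K * (1 - α) * (ρ * T) + (α * (ρ * T) + 1) * Td) := by
  rw [mrcSinr]; ring

theorem monotoneOn_mrcRate (hρ : 0 < ρ) (hT : 0 < T) (hK : 1 ≤ K) (hM : 1 ≤ M) {α : ℝ}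
    (hα0 : 0 ≤ α) (hα1 : α ≤ 1) : MonotoneOn (mrcRate ρ T K M α) (Ioi 0) := by
  have h1α : 0 ≤ 1 - α := sub_nonneg.2 hα1
  have hK1 : 0 ≤ K - 1 := sub_nonneg.2 hK
  have hM1 : 0 ≤ M - 1 := sub_nonneg.2 hM
  have hrate : ∀ Td, mrcRate ρ T K M α Td = K / (T * log 2) * (Td * log (1 +
      (M - 1) * α * (1 - α) * (ρ * T) ^ 2 /
        (α * (1 - α) * (ρ * T) ^ 2 * (K - 1) + K * (1 - α) * (ρ * T)
          + (α * (ρ * T) + 1) * Td))) := by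
    intro Td; rw [mrcRate, mrcSinr_eq_div_affine, logb]; ring
  intro x hx y hy hxy
  rw [hrate, hrate]
  refine mul_le_mul_of_nonneg_left ?_ (div_nonneg (by linarith) (by positivity))
  exact monotoneOn_mul_log_one_add_div_affine (by positivity) (by positivity) (by positivity)
    hx hy hxy

theorem isMaxOn_mrcSinr (hρ : 0 < ρ) (hT : 0 < T) (hK : 1 ≤ K) (hM : 1 ≤ M) {Td : ℝ}
    (hTd : 0 < Td) :
    IsMaxOn (fun α => mrcSinr ρ T K M α Td) (Icc 0 1) (mrcAlphaOpt ρ T K Td) := by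
  have hs : 0 < ρ * T * K + Td := by nlinarith [mul_pos hρ hT]
  have ht : 0 < ρ * T * Td + Td := by nlinarith [mul_pos hρ hT]
  have hsinr : (fun α => mrcSinr ρ T K M α Td) = fun α => (M - 1) * (ρ * T) ^ 2 * (α * (1 - α)) /
      (α * (1 - α) * ((ρ * T) ^ 2 * (K - 1)) +
        (√(ρ * T * K + Td) ^ 2 * (1 - α) + √(ρ * T * Td + Td) ^ 2 * α)) := by
    funext α; rw [mrcSinr, sq_sqrt hs.le, sq_sqrt ht.le]; ring
  rw [hsinr]
  exact isMaxOn_mul_div_quadratic (mul_nonneg (sub_nonneg.2 hM) (sq_nonneg _))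
    (mul_nonneg (sq_nonneg _) (sub_nonneg.2 hK)) (sqrt_pos.2 hs) (sqrt_pos.2 ht)

theorem mrcRate_le_mrcRate_alphaOpt (hρ : 0 < ρ) (hT : 0 < T) (hK : 1 ≤ K) (hM : 1 ≤ M)
    {α Td D : ℝ} (hα0 : 0 ≤ α) (hα1 : α ≤ 1) (hTd : 0 < Td) (hTdD : Td ≤ D) :
    mrcRate ρ T K M α Td ≤ mrcRate ρ T K M (mrcAlphaOpt ρ T K D) D := by
  have hD : 0 < D := hTd.trans_le hTdD
  have hsinr : 0 ≤ mrcSinr ρ T K M α D := by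
    rw [mrcSinr_eq_div_affine]
    have := mul_pos hρ hT
    have h1α : 0 ≤ 1 - α := sub_nonneg.2 hα1
    have hK1 : 0 ≤ K - 1 := sub_nonneg.2 hK
    have hM1 : 0 ≤ M - 1 := sub_nonneg.2 hM
    positivity
  calc mrcRate ρ T K M α Td ≤ mrcRate ρ T K M α D :=
        monotoneOn_mrcRate hρ hT hK hM hα0 hα1 hTd hD hTdD
    _ ≤ mrcRate ρ T K M (mrcAlphaOpt ρ T K D) D := by
      refine mul_le_mul_of_nonneg_left (logb_le_logb_of_le one_lt_two (by linarith) ?_)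
        (div_nonneg (mul_nonneg hD.le (by linarith)) hT.le)
      exact (add_le_add_iff_left 1).2 (isMaxOn_iff.1 (isMaxOn_mrcSinr hρ hT hK hM hD) α ⟨hα0, hα1⟩)

end Mrc

theorem mrc_joint_opt_case3_general (T K M ρ ρmax : ℝ) (hTK : 2 * K < T)
    (hK : 1 < K) (hM : 1 < M) (hρ : 0 < ρ) :
    let F : Set (ℝ × ℝ) := {p | 0 ≤ p.1 ∧ p.1 ≤ 1 ∧ 0 < p.2 ∧ p.2 ≤ T - K ∧
      ρ * T * p.1 + ρmax * p.2 ≤ ρmax * T ∧ ρ * T ≤ ρ * T * p.1 + ρmax * p.2}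
    let R : ℝ → ℝ → ℝ := fun α Td =>
      (Td * K / T) * Real.logb 2 (1 +
        (M - 1) * α * (1 - α) * (ρ * T) ^ 2 /
          (α * (1 - α) * (ρ * T) ^ 2 * (K - 1) + K * (1 - α) * ρ * T
            + α * ρ * T * Td + Td))
    let Td0 : ℝ := T - K
    let αd : ℝ := (Real.sqrt ((ρ * T * K + Td0) * (ρ * T * Td0 + Td0))
      - (ρ * T * K + Td0)) / (ρ * T * (Td0 - K))
    let α₁ : ℝ := ρmax * K / (ρ * T)
    let α₂ : ℝ := 1 - ρmax * (T - K) / (ρ * T)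
    α₂ < αd → αd < α₁ →
      (αd, T - K) ∈ F ∧ ∀ p ∈ F, R p.1 p.2 ≤ R αd (T - K) := by
  intro F R Td0 αd α₁ α₂ hα₂ hα₁
  have hT : 0 < T := by linarith
  have hP : 0 < ρ * T := mul_pos hρ hT
  have hD : 0 < T - K := by linarith
  have hs : 0 < ρ * T * K + (T - K) := by nlinarith
  have hst : ρ * T * K + (T - K) < ρ * T * (T - K) + (T - K) := by nlinarith
  have hαd : αd = mrcAlphaOpt ρ T K (T - K) := by
    have hden : ρ * T * (T - K - K) = (ρ * T * (T - K) + (T - K)) - (ρ * T * K + (T - K)) := by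
      ring
    show _ / _ = _
    rw [hden, sqrt_mul_sub_div_sub hs.le (hs.trans hst).le hst.ne]
    rfl
  have hαd_mem : αd ∈ Icc 0 1 := by
    rw [hαd, mrcAlphaOpt]
    exact ⟨by positivity,
      div_le_one_of_le₀ (le_add_of_nonneg_right (sqrt_nonneg _)) (by positivity)⟩
  refine ⟨⟨hαd_mem.1, hαd_mem.2, hD, le_rfl, ?_, ?_⟩, ?_⟩
  · have := (lt_div_iff₀ hP).1 hα₁
    linarith
  · have := (lt_div_iff₀ hP).1 (sub_lt_comm.1 hα₂)
    linarith
  · rintro ⟨α, Td⟩ ⟨hα0, hα1, hTd, hTdle, -, -⟩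
    rw [hαd]
    exact mrcRate_le_mrcRate_alphaOpt hρ hT hK.le hM.le hα0 hα1 hTd hTdle

/-- Case 3 of the joint optimization for MRC, neither power limited by
`ρ_max`: if `α₂ < α† < α₁` then `(α†, T-K)` is feasible and maximizes the MRC rate
over the feasible set `F`. -/
theorem mrc_joint_opt_case3 (T K M ρ ρmax : ℝ) (hTK : 2 * K < T) (hK0 : 0 < K)
    (hK : 1 < K) (hM : 1 < M) (hρ : 0 < ρ) (hρρmax : ρ ≤ ρmax) :
    let F : Set (ℝ × ℝ) := {p | 0 ≤ p.1 ∧ p.1 ≤ 1 ∧ 0 < p.2 ∧ p.2 ≤ T - K ∧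
      ρ * T * p.1 + ρmax * p.2 ≤ ρmax * T ∧ ρ * T ≤ ρ * T * p.1 + ρmax * p.2}
    let R : ℝ → ℝ → ℝ := fun α Td =>
      (Td * K / T) * Real.logb 2 (1 +
        (M - 1) * α * (1 - α) * (ρ * T) ^ 2 /
          (α * (1 - α) * (ρ * T) ^ 2 * (K - 1) + K * (1 - α) * ρ * T
            + α * ρ * T * Td + Td))
    let Td0 : ℝ := T - K
    let αd : ℝ := (Real.sqrt ((ρ * T * K + Td0) * (ρ * T * Td0 + Td0))
      - (ρ * T * K + Td0)) / (ρ * T * (Td0 - K))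
    let α₁ : ℝ := ρmax * K / (ρ * T)
    let α₂ : ℝ := 1 - ρmax * (T - K) / (ρ * T)
    α₂ < αd → αd < α₁ →
      (αd, T - K) ∈ F ∧ ∀ p ∈ F, R p.1 p.2 ≤ R αd (T - K) :=
  mrc_joint_opt_case3_general T K M ρ ρmax hTK hK hM hρ
end
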